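/- Let μ be quasi-infinitely divisible with characteristic triplet (0, ν, γ)_c. Then ∫_ℝ (1 ∧ |x|) ν⁺(dx) ≥ ∫_ℝ (1 ∧ |x|) ν⁻(dx). -/

import Mathlib

/-! Since `|μ̂| ≤ 1` and there is no Gaussian part, the real part of the exponent is nonpositive:
`∫ (1 - cos (z x)) ν⁻(dx) ≤ ∫ (1 - cos (z x)) ν⁺(dx)` for every `z`. Integrate this in `z`
against `(1 - cos z) / z²`, i.e. against the density `σ`, and swap the integrals (Tonelli):
`∫₀^∞ (1 - cos z) (1 - cos (z x)) / z² dz = J · (1 ∧ |x|)` with `J = ∫₀^∞ (1 - cos z) / z² dz > 0`,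
by the product-to-sum formula and the scaling `∫₀^∞ (1 - cos (a z)) / z² dz = |a| J`.
Dividing by `J` gives the claim. -/

open MeasureTheory Complex Filter

noncomputable section

/-- Characteristic function of a measure on ℝ. -/
def charFn (μ : Measure ℝ) (z : ℝ) : ℂ := ∫ x, Complex.exp (Complex.I * z * x) ∂μ

/-- A representation function: bounded, Borel measurable, with (c x - x)/x² → 0 as x → 0. -/
def IsRepFn (c : ℝ → ℝ) : Prop :=
  Measurable c ∧ (∃ M : ℝ, ∀ x, |c x| ≤ M) ∧
    Tendsto (fun x => (c x - x) / x ^ 2) (nhdsWithin 0 {(0:ℝ)}ᶜ) (nhds 0)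

/-- The kernel g_c(x,z). -/
def gKer (c : ℝ → ℝ) (x z : ℝ) : ℂ :=
  if x = 0 then -(z:ℂ)^2 / 2
  else (Complex.exp (Complex.I * z * x) - 1 - Complex.I * z * c x) / ((min 1 (x^2) : ℝ) : ℂ)

/-- Quasi-infinitely divisible w.r.t. c: the characteristic function has a
Lévy–Khintchine type representation with a finite signed measure ζ = ζp - ζm
(given by its Jordan decomposition). -/
def IsQID (c : ℝ → ℝ) (μ : Measure ℝ) : Prop :=
  ∃ γ : ℝ, ∃ ζp ζm : Measure ℝ, IsFiniteMeasure ζp ∧ IsFiniteMeasure ζm ∧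
    Measure.MutuallySingular ζp ζm ∧
    ∀ z : ℝ, charFn μ z =
      Complex.exp (Complex.I * γ * z + (∫ x, gKer c x z ∂ζp) - ∫ x, gKer c x z ∂ζm)

/-- Infinitely divisible w.r.t. c: as above with a (positive) finite measure ζ. -/
def IsID (c : ℝ → ℝ) (μ : Measure ℝ) : Prop :=
  ∃ γ : ℝ, ∃ ζ : Measure ℝ, IsFiniteMeasure ζ ∧
    ∀ z : ℝ, charFn μ z = Complex.exp (Complex.I * γ * z + ∫ x, gKer c x z ∂ζ)

/-- The Lévy–Khintchine integral ∫ (e^{izx} - 1 - izc(x)) dν. -/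
def lkInt (c : ℝ → ℝ) (ν : Measure ℝ) (z : ℝ) : ℂ :=
  ∫ x, (Complex.exp (Complex.I * z * x) - 1 - Complex.I * z * c x) ∂ν

/-- μ has characteristic triplet (a, ν, γ) w.r.t. c, where the quasi-Lévy measure ν
is given by its Jordan decomposition ν = νp - νm. -/
def HasTriplet (c : ℝ → ℝ) (μ : Measure ℝ) (a : ℝ) (νp νm : Measure ℝ) (γ : ℝ) : Prop :=
  Measure.MutuallySingular νp νm ∧ νp {0} = 0 ∧ νm {0} = 0 ∧
  (∫⁻ x, ENNReal.ofReal (min 1 (x^2)) ∂(νp + νm)) < ⊤ ∧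
  ∀ z : ℝ, charFn μ z =
    Complex.exp (Complex.I * γ * z - a * z^2 / 2 + lkInt c νp z - lkInt c νm z)

open Set Asymptotics Topology
open scoped ENNReal

def fejer (a z : ℝ) : ℝ := (1 - Real.cos (a * z)) / z ^ 2

lemma fejer_nonneg (a z : ℝ) : 0 ≤ fejer a z :=
  div_nonneg (by linarith [Real.cos_le_one (a * z)]) (sq_nonneg z)

lemma integrableOn_fejer (a : ℝ) : IntegrableOn (fejer a) (Ioi 0) := by
  have hmeas : AEStronglyMeasurable (fejer a) (volume.restrict (Ioi 0)) :=
    (by unfold fejer; fun_prop : Measurable (fejer a)).aestronglyMeasurable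
  have hnear : IntegrableOn (fejer a) (Ioc 0 1) := by
    refine Integrable.mono' (integrable_const (a ^ 2 / 2)) (hmeas.mono_set Ioc_subset_Ioi_self) ?_
    filter_upwards [ae_restrict_mem measurableSet_Ioc] with z ⟨hz0, hz1⟩
    rw [Real.norm_of_nonneg (fejer_nonneg a z), fejer, div_le_iff₀ (by positivity)]
    nlinarith [Real.one_sub_sq_div_two_le_cos (x := a * z), sq_nonneg a, mul_le_one₀ hz1 hz0.le hz1]
  have hfar : IntegrableOn (fejer a) (Ioi 1) := by
    have hdom := (integrableOn_Ioi_rpow_of_lt (by norm_num : (-2 : ℝ) < -1) one_pos).const_mul 2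
    refine Integrable.mono' hdom (hmeas.mono_set (Ioi_subset_Ioi zero_le_one)) ?_
    filter_upwards [ae_restrict_mem measurableSet_Ioi] with z (hz : 1 < z)
    rw [Real.norm_of_nonneg (fejer_nonneg a z), fejer, Real.rpow_neg (by positivity),
      Real.rpow_two, ← div_eq_mul_inv]
    gcongr
    linarith [Real.neg_one_le_cos (a * z)]
  rw [← Ioc_union_Ioi_eq_Ioi zero_le_one]
  exact hnear.union hfar

def fejerIntegral (a : ℝ) : ℝ := ∫ z in Ioi 0, fejer a z

lemma fejerIntegral_eq_abs_mul (a : ℝ) : fejerIntegral a = |a| * fejerIntegral 1 := by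
  have hscale {b : ℝ} (hb : 0 < b) : fejerIntegral b = b * fejerIntegral 1 := by
    have h : ∀ z, fejer b z = b ^ 2 * fejer 1 (b * z) := fun z => by
      rw [fejer, fejer, one_mul, mul_pow, mul_div_assoc', mul_div_mul_left _ _ (by positivity)]
    simp only [fejerIntegral, h, integral_const_mul, integral_comp_mul_left_Ioi (fejer 1) 0 hb,
      mul_zero, smul_eq_mul]
    field_simp
  rcases lt_trichotomy a 0 with ha | rfl | ha
  · have hneg : fejerIntegral a = fejerIntegral (-a) := by
      simp only [fejerIntegral, fejer, neg_mul, Real.cos_neg]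
    rw [hneg, hscale (neg_pos.mpr ha), abs_of_neg ha]
  · simp [fejerIntegral, fejer]
  · rw [hscale ha, abs_of_pos ha]

lemma fejerIntegral_one_pos : 0 < fejerIntegral 1 := by
  have hpos : 0 < ∫ z in (1 : ℝ)..3, fejer 1 z := by
    refine intervalIntegral.intervalIntegral_pos_of_pos_on
      ((integrableOn_fejer 1).mono_set ?_).intervalIntegrable (fun z ⟨hz1, hz3⟩ => ?_) (by norm_num)
    · rw [uIcc_of_le (by norm_num)]
      exact fun z hz => lt_of_lt_of_le one_pos hz.1
    · have : Real.cos z < 1 := by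
        simpa using Real.cos_lt_cos_of_nonneg_of_le_pi le_rfl (by linarith [Real.pi_gt_three])
          (by linarith : (0 : ℝ) < z)
      rw [fejer, one_mul]
      exact div_pos (by linarith) (by positivity)
  rw [intervalIntegral.integral_of_le (by norm_num)] at hpos
  refine hpos.trans_le (setIntegral_mono_set (integrableOn_fejer 1)
    (ae_of_all _ (fejer_nonneg 1)) (ae_of_all _ fun z hz => lt_of_lt_of_le one_pos hz.1.le))

lemma fejer_one_mul_one_sub_cos (x z : ℝ) :
    fejer 1 z * (1 - Real.cos (z * x)) =
      fejer 1 z + fejer x z - fejer (1 + x) z / 2 - fejer (1 - x) z / 2 := by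
  rcases eq_or_ne z 0 with rfl | hz
  · simp [fejer]
  · simp only [fejer, add_mul, sub_mul, one_mul, Real.cos_add, Real.cos_sub, mul_comm z x]
    field_simp
    ring

lemma min_one_abs_eq (x : ℝ) : min 1 |x| = 1 + |x| - |1 + x| / 2 - |1 - x| / 2 := by
  rcases abs_cases x with ⟨h, _⟩ | ⟨h, _⟩ <;> rcases abs_cases (1 + x) with ⟨h', _⟩ | ⟨h', _⟩ <;>
    rcases abs_cases (1 - x) with ⟨h'', _⟩ | ⟨h'', _⟩ <;>
    rcases min_cases 1 |x| with ⟨hm, _⟩ | ⟨hm, _⟩ <;> linarith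

lemma lintegral_fejer_one_mul_one_sub_cos (x : ℝ) :
    ∫⁻ z in Ioi 0, ENNReal.ofReal (fejer 1 z * (1 - Real.cos (z * x))) =
      ENNReal.ofReal (fejerIntegral 1 * min 1 |x|) := by
  have hdecomp := funext (fejer_one_mul_one_sub_cos x)
  have I := integrableOn_fejer
  have hint : IntegrableOn (fun z => fejer 1 z * (1 - Real.cos (z * x))) (Ioi 0) := by
    rw [hdecomp]
    exact (((I 1).add (I x)).sub ((I (1 + x)).div_const 2)).sub ((I (1 - x)).div_const 2)
  rw [← ofReal_integral_eq_lintegral_ofReal hint (ae_of_all _ fun z =>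
    mul_nonneg (fejer_nonneg 1 z) (by linarith [Real.cos_le_one (z * x)])), hdecomp,
    integral_sub, integral_sub, integral_add (I 1) (I x), integral_div, integral_div]
  change ENNReal.ofReal (fejerIntegral 1 + fejerIntegral x - fejerIntegral (1 + x) / 2
    - fejerIntegral (1 - x) / 2) = _
  rw [fejerIntegral_eq_abs_mul x, fejerIntegral_eq_abs_mul (1 + x),
    fejerIntegral_eq_abs_mul (1 - x), min_one_abs_eq]
  · congr 1
    ring
  · exact (I 1).add (I x)
  · exact (I (1 + x)).div_const 2
  · exact ((I 1).add (I x)).sub ((I (1 + x)).div_const 2)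
  · exact (I (1 - x)).div_const 2

lemma sigmaFinite_of_lintegral_ne_top {α : Type*} [MeasurableSpace α] {μ : Measure α}
    {f : α → ℝ≥0∞} (hf : AEMeasurable f μ) (hf0 : ∀ᵐ x ∂μ, f x ≠ 0)
    (hfin : ∫⁻ x, f x ∂μ ≠ ∞) : SigmaFinite μ := by
  have := isFiniteMeasure_withDensity hfin
  rw [← withDensity_inv_same₀ hf hf0 (ae_lt_top' hf hfin |>.mono fun _ => LT.lt.ne)]
  exact SigmaFinite.withDensity_of_ne_top <| (withDensity_absolutelyContinuous μ f).ae_le <|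
    hf0.mono fun _ => ENNReal.inv_ne_top.mpr

lemma exists_norm_le_mul_min_one_sq {E : Type*} [SeminormedAddCommGroup E] {f : ℝ → E} {M : ℝ}
    (hM : ∀ x, ‖f x‖ ≤ M) (hO : f =O[𝓝[≠] 0] fun x => x ^ 2) :
    ∃ C, ∀ x ≠ 0, ‖f x‖ ≤ C * min 1 (x ^ 2) := by
  obtain ⟨C, hC⟩ := hO.bound
  obtain ⟨δ, hδ, hnear⟩ := Metric.eventually_nhds_iff.mp (eventually_nhdsWithin_iff.mp hC)
  set ε := min δ 1
  have hε : 0 < ε := lt_min hδ one_pos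
  refine ⟨max C (M / ε ^ 2), fun x hx => ?_⟩
  rcases lt_or_ge |x| ε with hsmall | hlarge
  · have hx1 : x ^ 2 ≤ 1 := by
      nlinarith [abs_nonneg x, sq_abs x, min_le_right δ 1]
    calc ‖f x‖ ≤ C * ‖x ^ 2‖ := hnear (by simpa using hsmall.trans_le (min_le_left δ 1)) hx
      _ ≤ max C (M / ε ^ 2) * min 1 (x ^ 2) := by
        rw [min_eq_right hx1, Real.norm_of_nonneg (sq_nonneg x)]
        exact mul_le_mul_of_nonneg_right (le_max_left _ _) (sq_nonneg x)
  · have hε2 : ε ^ 2 ≤ min 1 (x ^ 2) :=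
      le_min (pow_le_one₀ hε.le (min_le_right δ 1)) (by nlinarith [sq_abs x])
    have hM0 : 0 ≤ M := (norm_nonneg _).trans (hM x)
    calc ‖f x‖ ≤ M / ε ^ 2 * ε ^ 2 := by rw [div_mul_cancel₀ _ (by positivity)]; exact hM x
      _ ≤ max C (M / ε ^ 2) * min 1 (x ^ 2) :=
        mul_le_mul (le_max_right _ _) hε2 (by positivity)
          ((div_nonneg hM0 (by positivity)).trans (le_max_right _ _))

lemma isBigO_cexp_I_mul_sub_one_sub (z : ℝ) :
    (fun x : ℝ => cexp (I * z * x) - 1 - I * z * x) =O[𝓝 0] fun x => x ^ 2 := by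
  have hsmall : ∀ᶠ x : ℝ in 𝓝 0, ‖I * z * x‖ ≤ 1 :=
    ((Continuous.tendsto' (by fun_prop) 0 0 (by simp)).eventually
      (Metric.closedBall_mem_nhds 0 one_pos)).mono fun _ => mem_closedBall_zero_iff.mp
  refine IsBigO.of_bound (z ^ 2) (hsmall.mono fun x hx => ?_)
  calc ‖cexp (I * z * x) - 1 - I * z * x‖ ≤ ‖I * z * x‖ ^ 2 := norm_exp_sub_one_sub_id_le hx
    _ = z ^ 2 * ‖x ^ 2‖ := by simp [mul_pow]

lemma isBigO_lkIntegrand {c : ℝ → ℝ} (hc : IsRepFn c) (z : ℝ) :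
    (fun x : ℝ => cexp (I * z * x) - 1 - I * z * c x) =O[𝓝[≠] 0] fun x => x ^ 2 := by
  have hrep : (fun x => x - c x) =O[𝓝[≠] 0] fun x => x ^ 2 := by
    refine (isLittleO_iff_tendsto' ?_ |>.mpr ?_).isBigO
    · filter_upwards [self_mem_nhdsWithin] with x hx h
      exact absurd (pow_eq_zero_iff two_ne_zero |>.mp h) hx
    · simpa [← neg_div, neg_sub] using hc.2.2.neg
  have hrepC : (fun x : ℝ => I * z * ((x - c x : ℝ) : ℂ)) =O[𝓝[≠] 0] fun x => x ^ 2 :=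
    (isBigO_ofReal_left.mpr hrep).const_mul_left _
  refine ((isBigO_cexp_I_mul_sub_one_sub z).mono nhdsWithin_le_nhds |>.add hrepC).congr_left
    fun x => ?_
  push_cast
  ring

section LevyMeasure

variable {c : ℝ → ℝ} {ν : Measure ℝ}

lemma sigmaFinite_of_lintegral_min_one_sq (h0 : ν {0} = 0)
    (hfin : ∫⁻ x, ENNReal.ofReal (min 1 (x ^ 2)) ∂ν ≠ ∞) : SigmaFinite ν :=
  sigmaFinite_of_lintegral_ne_top (by fun_prop)
    ((measure_eq_zero_iff_ae_notMem.mp h0).mono fun x hx => by simpa [sq_pos_iff] using hx) hfin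

lemma integrable_min_one_sq (hfin : ∫⁻ x, ENNReal.ofReal (min 1 (x ^ 2)) ∂ν ≠ ∞) :
    Integrable (fun x => min 1 (x ^ 2)) ν := by
  refine ⟨by fun_prop, ?_⟩
  rw [hasFiniteIntegral_iff_ofReal (ae_of_all _ fun x => by positivity)]
  exact hfin.lt_top

lemma integrable_of_isBigO_sq {E : Type*} [NormedAddCommGroup E] {f : ℝ → E} {M : ℝ}
    (h0 : ν {0} = 0) (hfin : ∫⁻ x, ENNReal.ofReal (min 1 (x ^ 2)) ∂ν ≠ ∞)
    (hf : AEStronglyMeasurable f ν) (hM : ∀ x, ‖f x‖ ≤ M)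
    (hO : f =O[𝓝[≠] 0] fun x => x ^ 2) : Integrable f ν := by
  obtain ⟨C, hC⟩ := exists_norm_le_mul_min_one_sq hM hO
  exact ((integrable_min_one_sq hfin).const_mul C).mono' hf
    ((measure_eq_zero_iff_ae_notMem.mp h0).mono fun x hx => hC x hx)

lemma integrable_lkIntegrand (hc : IsRepFn c) (h0 : ν {0} = 0)
    (hfin : ∫⁻ x, ENNReal.ofReal (min 1 (x ^ 2)) ∂ν ≠ ∞) (z : ℝ) :
    Integrable (fun x : ℝ => cexp (I * z * x) - 1 - I * z * c x) ν := by
  obtain ⟨M, hM⟩ := hc.2.1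
  have hcm := hc.1
  refine integrable_of_isBigO_sq (M := 2 + |z| * M) h0 hfin
    (by fun_prop) (fun x => ?_) (isBigO_lkIntegrand hc z)
  calc ‖cexp (I * z * x) - 1 - I * z * c x‖
      ≤ ‖cexp (I * z * x)‖ + ‖(1 : ℂ)‖ + ‖I * z * c x‖ :=
        (norm_sub_le _ _).trans (by gcongr; exact norm_sub_le _ _)
    _ ≤ 2 + |z| * M := by
      simp only [norm_exp, mul_re, I_re, ofReal_re, zero_mul, I_im, ofReal_im, mul_zero, sub_self,
        mul_im, one_mul, zero_add, Real.exp_zero, norm_one, Complex.norm_mul, norm_I, norm_real,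
        Real.norm_eq_abs]
      linarith [mul_le_mul_of_nonneg_left (hM x) (abs_nonneg z)]

lemma lintegral_one_sub_cos_eq_neg_re_lkInt (hc : IsRepFn c) (h0 : ν {0} = 0)
    (hfin : ∫⁻ x, ENNReal.ofReal (min 1 (x ^ 2)) ∂ν ≠ ∞) (z : ℝ) :
    ∫⁻ x, ENNReal.ofReal (1 - Real.cos (z * x)) ∂ν = ENNReal.ofReal (-(lkInt c ν z).re) := by
  have hint := integrable_lkIntegrand hc h0 hfin z
  have hre (x : ℝ) : (cexp (I * z * x) - 1 - I * z * c x).re = -(1 - Real.cos (z * x)) := by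
    simp [exp_re]
  have hint' : Integrable (fun x => 1 - Real.cos (z * x)) ν :=
    hint.re.neg.congr (ae_of_all _ fun x => neg_eq_iff_eq_neg.mpr (hre x))
  have hlk : (lkInt c ν z).re = -∫ x, (1 - Real.cos (z * x)) ∂ν := by
    rw [← integral_neg, lkInt]
    exact (integral_re hint).symm.trans (integral_congr_ae (ae_of_all _ hre))
  rw [hlk, neg_neg]
  exact (ofReal_integral_eq_lintegral_ofReal hint'
    (ae_of_all _ fun _ => sub_nonneg.mpr (Real.cos_le_one _))).symm

end LevyMeasure

lemma norm_charFn_le_one (μ : Measure ℝ) [IsProbabilityMeasure μ] (z : ℝ) :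
    ‖charFn μ z‖ ≤ 1 := by
  have : charFn μ z = charFun μ z := by
    simp only [charFn, charFun_apply_real, mul_comm I, mul_right_comm _ I]
  exact this ▸ norm_charFun_le_one z

lemma re_lkInt_le_of_hasTriplet {c : ℝ → ℝ} {μ : Measure ℝ} [IsProbabilityMeasure μ]
    {γ : ℝ} {νp νm : Measure ℝ} (h : HasTriplet c μ 0 νp νm γ) (z : ℝ) :
    (lkInt c νp z).re ≤ (lkInt c νm z).re := by
  have hnorm := norm_charFn_le_one μ z
  rw [h.2.2.2.2 z, norm_exp, Real.exp_le_one_iff] at hnorm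
  simpa using hnorm

lemma ofReal_fejerIntegral_mul_lintegral_min_one_abs (ν : Measure ℝ) [SFinite ν] :
    ENNReal.ofReal (fejerIntegral 1) * ∫⁻ x, ENNReal.ofReal (min 1 |x|) ∂ν =
      ∫⁻ z in Ioi 0, ENNReal.ofReal (fejer 1 z) *
        ∫⁻ x, ENNReal.ofReal (1 - Real.cos (z * x)) ∂ν := by
  have hJ := fejerIntegral_one_pos.le
  calc ENNReal.ofReal (fejerIntegral 1) * ∫⁻ x, ENNReal.ofReal (min 1 |x|) ∂ν
      = ∫⁻ x, (∫⁻ z in Ioi 0, ENNReal.ofReal (fejer 1 z * (1 - Real.cos (z * x)))) ∂ν := by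
        rw [← lintegral_const_mul _ (by fun_prop)]
        refine lintegral_congr fun x => ?_
        rw [lintegral_fejer_one_mul_one_sub_cos, ENNReal.ofReal_mul hJ]
    _ = ∫⁻ z in Ioi 0, ∫⁻ x, ENNReal.ofReal (fejer 1 z * (1 - Real.cos (z * x))) ∂ν :=
        lintegral_lintegral_swap (Measurable.aemeasurable (by unfold fejer; fun_prop))
    _ = _ := by
        refine lintegral_congr fun z => ?_
        simp only [ENNReal.ofReal_mul (fejer_nonneg 1 z)]
        exact lintegral_const_mul _ (by fun_prop)

/-- if the Gaussian variance is zero, then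
∫ (1 ∧ |x|) dν⁺ ≥ ∫ (1 ∧ |x|) dν⁻. -/
theorem stmt5 (c : ℝ → ℝ) (hc : IsRepFn c) (μ : Measure ℝ) [IsProbabilityMeasure μ]
    (γ : ℝ) (νp νm : Measure ℝ) (h : HasTriplet c μ 0 νp νm γ) :
    (∫⁻ x, ENNReal.ofReal (min 1 |x|) ∂νm) ≤ ∫⁻ x, ENNReal.ofReal (min 1 |x|) ∂νp := by
  have ⟨_, h0p, h0m, hfin, _⟩ := h
  rw [lintegral_add_measure, ENNReal.add_lt_top] at hfin
  have := sigmaFinite_of_lintegral_min_one_sq h0p hfin.1.ne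
  have := sigmaFinite_of_lintegral_min_one_sq h0m hfin.2.ne
  have hcos (z : ℝ) : ∫⁻ x, ENNReal.ofReal (1 - Real.cos (z * x)) ∂νm ≤
      ∫⁻ x, ENNReal.ofReal (1 - Real.cos (z * x)) ∂νp := by
    rw [lintegral_one_sub_cos_eq_neg_re_lkInt hc h0m hfin.2.ne,
      lintegral_one_sub_cos_eq_neg_re_lkInt hc h0p hfin.1.ne]
    exact ENNReal.ofReal_le_ofReal (neg_le_neg (re_lkInt_le_of_hasTriplet h z))
  rw [← ENNReal.mul_le_mul_iff_right (ENNReal.ofReal_pos.mpr fejerIntegral_one_pos).ne'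
    ENNReal.ofReal_ne_top, ofReal_fejerIntegral_mul_lintegral_min_one_abs,
    ofReal_fejerIntegral_mul_lintegral_min_one_abs]
  exact lintegral_mono fun z => mul_le_mul_of_nonneg_left (hcos z) zero_le
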